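/- Let T > 0, let ξ : ℝ → ℝ be continuous on [0, T], and let W, Z : ℝ → ℂ be functions such that for every t ∈ [0, T]: Im(W t) > 0, Im(Z t) > 0, W t ≠ Z t, W has derivative 2/(W t − ξ t) at t, and Z has derivative 2/(Z t − ξ t) at t. Define G(t) := −(1/2π)·log|(W t − Z t)/(W t − conj(Z t))|, P_W(t) := −(1/π)·Im(1/(W t − ξ t)), and P_Z(t) := −(1/π)·Im(1/(Z t − ξ t)). Then P_W(t) > 0 and P_Z(t) > 0 for all t, G(T) ≥ 0, and 2π·∫₀^T P_W(t)·P_Z(t) dt = G(0) − G(T) ≤ G(0). -/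

import Mathlib

/-!
With `a = W - ξ` and `b = Z - ξ`, the Loewner equation gives `W - Z` and `W - conj Z` the
logarithmic derivatives `-2/(ab)` and `-2/(a conj b)`; the real part of their difference is
`4 Im(1/a) Im(1/b) = 4π² P_W P_Z`, so `G' = -2π P_W P_Z` (Hadamard's formula). As `G' ≤ 0`, it
is integrable without further regularity, and the fundamental theorem of calculus integrates it.
Finally `G ≥ 0` because `|w - z| ≤ |w - conj z|` for `w, z` in the upper half-plane.
-/

/-- Green function of the evolving domain in the half-plane chart:
`G(t) = -(1/2π)·log|(W t - Z t)/(W t - conj (Z t))|`. -/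
noncomputable def GreenT (W Z : ℝ → ℂ) (t : ℝ) : ℝ :=
  -(1 / (2 * Real.pi)) *
    Real.log ‖(W t - Z t) / (W t - (starRingEnd ℂ) (Z t))‖

/-- Poisson kernel at the tip in the half-plane chart:
`P_W(t) = -(1/π)·Im(1/(W t - ξ t))`. -/
noncomputable def PoisT (ξ : ℝ → ℝ) (W : ℝ → ℂ) (t : ℝ) : ℝ :=
  -(1 / Real.pi) * ((W t - (ξ t : ℂ))⁻¹).im

open ComplexConjugate
open scoped RealInnerProductSpace

theorem HasDerivAt.log_norm {F : Type*} [NormedAddCommGroup F] [InnerProductSpace ℝ F]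
    {f : ℝ → F} {f' : F} {t : ℝ} (hf : HasDerivAt f f' t) (h0 : f t ≠ 0) :
    HasDerivAt (fun s => Real.log ‖f s‖) (⟪f t, f'⟫ / ‖f t‖ ^ 2) t := by
  have hsq : HasDerivAt (fun s => Real.log (‖f s‖ ^ 2) / 2)
      (2 * ⟪f t, f'⟫ / ‖f t‖ ^ 2 / 2) t :=
    (hf.norm_sq.log (by positivity)).div_const 2
  convert hsq using 1
  · funext s
    rw [Real.log_pow]
    ring
  · ring

theorem intervalIntegral.integral_eq_sub_of_hasDerivAt_of_nonpos {g g' : ℝ → ℝ} {a b : ℝ}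
    (hab : a ≤ b) (hg : ∀ x ∈ Set.Icc a b, HasDerivAt g (g' x) x)
    (hg' : ∀ x ∈ Set.Ioo a b, g' x ≤ 0) : ∫ x in a..b, g' x = g b - g a := by
  have hg_uIcc : ∀ x ∈ Set.uIcc a b, HasDerivAt g (g' x) x := by
    rwa [Set.uIcc_of_le hab]
  have hint : IntervalIntegrable (fun x => -g' x) MeasureTheory.volume a b := by
    refine intervalIntegrable_deriv_of_nonneg (g := fun x => -g x)
      (fun x hx => (hg_uIcc x hx).continuousAt.neg.continuousWithinAt) ?_ ?_ <;>
      simp only [min_eq_left hab, max_eq_right hab]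
    · exact fun x hx => (hg x (Set.Ioo_subset_Icc_self hx)).neg
    · exact fun x hx => neg_nonneg.2 (hg' x hx)
  exact intervalIntegral.integral_eq_sub_of_hasDerivAt hg_uIcc
    (by simpa only [Pi.neg_def, neg_neg] using hint.neg)

namespace Complex

theorem HasDerivAt.log_norm {f : ℝ → ℂ} {f' : ℂ} {t : ℝ} (hf : HasDerivAt f f' t)
    (h0 : f t ≠ 0) : HasDerivAt (fun s => Real.log ‖f s‖) (f' / f t).re t := by
  convert _root_.HasDerivAt.log_norm hf h0 using 1
  rw [Complex.inner, ← normSq_eq_norm_sq, div_re, mul_re, conj_re, conj_im]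
  ring

theorem HasDerivAt.log_norm_div {u v : ℝ → ℂ} {u' v' : ℂ} {t : ℝ} (hu : HasDerivAt u u' t)
    (hv : HasDerivAt v v' t) (hu0 : u t ≠ 0) (hv0 : v t ≠ 0) :
    HasDerivAt (fun s => Real.log ‖u s / v s‖) (u' / u t - v' / v t).re t := by
  convert HasDerivAt.log_norm (f := fun s => u s / v s) (hu.div hv hv0)
    (div_ne_zero hu0 hv0) using 2
  field_simp

theorem sub_ofReal_ne_zero_of_im_pos {w : ℂ} (hw : 0 < w.im) (x : ℝ) : w - x ≠ 0 :=
  ne_of_apply_ne im (by simpa using hw.ne')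

theorem inv_im_neg_of_im_pos {z : ℂ} (hz : 0 < z.im) : (z⁻¹).im < 0 := by
  rw [inv_im]
  exact div_neg_of_neg_of_pos (neg_neg_of_pos hz) (normSq_pos.2 (ne_of_apply_ne im hz.ne'))

theorem norm_sub_le_norm_sub_conj {w z : ℂ} (hw : 0 ≤ w.im) (hz : 0 ≤ z.im) :
    ‖w - z‖ ≤ ‖w - conj z‖ := by
  rw [norm_def, norm_def]
  gcongr
  simp only [normSq_apply, sub_re, sub_im, conj_re, conj_im]
  nlinarith [mul_nonneg hw hz]

theorem re_loewner_logDeriv_sub {a b : ℂ} (ha : a ≠ 0) (hb : b ≠ 0) (hab : a - b ≠ 0)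
    (habc : a - conj b ≠ 0) :
    ((2 / a - 2 / b) / (a - b) - (2 / a - conj (2 / b)) / (a - conj b)).re
      = 4 * (a⁻¹).im * (b⁻¹).im := by
  have hcb : conj b ≠ 0 := by simpa using hb
  have hdiff : (2 / a - 2 / b) / (a - b) - (2 / a - conj (2 / b)) / (a - conj b)
      = 2 * a⁻¹ * (conj b⁻¹ - b⁻¹) := by
    rw [map_div₀, map_ofNat, map_inv₀]
    field_simp
    ring
  rw [hdiff]
  simp only [map_inv₀, mul_re, mul_im, inv_re, inv_im, sub_re, sub_im, conj_re, conj_im,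
    normSq_conj, re_ofNat, im_ofNat]
  ring

end Complex

open Complex

theorem poisT_pos {ξ : ℝ → ℝ} {W : ℝ → ℂ} {t : ℝ} (hW : 0 < (W t).im) :
    0 < PoisT ξ W t :=
  mul_pos_of_neg_of_neg (neg_neg_of_pos (by positivity))
    (inv_im_neg_of_im_pos (by simpa using hW))

theorem greenT_nonneg {W Z : ℝ → ℂ} {t : ℝ} (hW : 0 ≤ (W t).im) (hZ : 0 ≤ (Z t).im) :
    0 ≤ GreenT W Z t := by
  have hlog : Real.log ‖(W t - Z t) / (W t - conj (Z t))‖ ≤ 0 := by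
    rw [norm_div]
    exact Real.log_nonpos (by positivity)
      (div_le_one_of_le₀ (norm_sub_le_norm_sub_conj hW hZ) (norm_nonneg _))
  exact mul_nonneg_of_nonpos_of_nonpos (neg_nonpos.2 (by positivity)) hlog

theorem hasDerivAt_greenT {ξ : ℝ → ℝ} {W Z : ℝ → ℂ} {t : ℝ} (hW : 0 < (W t).im)
    (hZ : 0 < (Z t).im) (hWZ : W t ≠ Z t)
    (hW' : HasDerivAt W (2 / (W t - (ξ t : ℂ))) t)
    (hZ' : HasDerivAt Z (2 / (Z t - (ξ t : ℂ))) t) :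
    HasDerivAt (GreenT W Z) (-(2 * Real.pi) * (PoisT ξ W t * PoisT ξ Z t)) t := by
  set a := W t - (ξ t : ℂ)
  set b := Z t - (ξ t : ℂ)
  have hu0 : W t - Z t ≠ 0 := sub_ne_zero.2 hWZ
  have hv0 : W t - conj (Z t) ≠ 0 := ne_of_apply_ne im (by simp; linarith)
  have hu : HasDerivAt (fun s => W s - Z s) (2 / a - 2 / b) t := hW'.sub hZ'
  have hv : HasDerivAt (fun s => W s - conj (Z s)) (2 / a - conj (2 / b)) t :=
    hW'.sub hZ'.star
  refine ((HasDerivAt.log_norm_div hu hv hu0 hv0).const_mul _).congr_deriv ?_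
  have hWZ_ab : W t - Z t = a - b := by ring
  have hWZ_abc : W t - conj (Z t) = a - conj b := by simp [a, b]
  rw [hWZ_ab, hWZ_abc, re_loewner_logDeriv_sub (sub_ofReal_ne_zero_of_im_pos hW _)
    (sub_ofReal_ne_zero_of_im_pos hZ _) (hWZ_ab ▸ hu0) (hWZ_abc ▸ hv0), PoisT, PoisT]
  field_simp
  ring

theorem statement13_general (T : ℝ) (hT : 0 < T) (ξ : ℝ → ℝ) (W Z : ℝ → ℂ)
    (hW : ∀ t ∈ Set.Icc 0 T, 0 < (W t).im) (hZ : ∀ t ∈ Set.Icc 0 T, 0 < (Z t).im)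
    (hWZ : ∀ t ∈ Set.Icc 0 T, W t ≠ Z t)
    (hW' : ∀ t ∈ Set.Icc 0 T, HasDerivAt W (2 / (W t - (ξ t : ℂ))) t)
    (hZ' : ∀ t ∈ Set.Icc 0 T, HasDerivAt Z (2 / (Z t - (ξ t : ℂ))) t) :
    (∀ t ∈ Set.Icc 0 T, 0 < PoisT ξ W t ∧ 0 < PoisT ξ Z t) ∧
    0 ≤ GreenT W Z T ∧
    2 * Real.pi * ∫ t in (0 : ℝ)..T, PoisT ξ W t * PoisT ξ Z t
      = GreenT W Z 0 - GreenT W Z T ∧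
    2 * Real.pi * ∫ t in (0 : ℝ)..T, PoisT ξ W t * PoisT ξ Z t
      ≤ GreenT W Z 0 := by
  have hP : ∀ t ∈ Set.Icc 0 T, 0 < PoisT ξ W t ∧ 0 < PoisT ξ Z t := fun t ht =>
    ⟨poisT_pos (hW t ht), poisT_pos (hZ t ht)⟩
  have hT_mem : T ∈ Set.Icc 0 T := Set.right_mem_Icc.2 hT.le
  have hGT : 0 ≤ GreenT W Z T := greenT_nonneg (hW T hT_mem).le (hZ T hT_mem).le
  have hFTC := intervalIntegral.integral_eq_sub_of_hasDerivAt_of_nonpos hT.le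
    (fun t ht => hasDerivAt_greenT (hW t ht) (hZ t ht) (hWZ t ht) (hW' t ht) (hZ' t ht))
    (fun t ht =>
      have hPt := hP t (Set.Ioo_subset_Icc_self ht)
      mul_nonpos_of_nonpos_of_nonneg (neg_nonpos.2 Real.two_pi_pos.le)
        (mul_pos hPt.1 hPt.2).le)
  rw [intervalIntegral.integral_const_mul] at hFTC
  exact ⟨hP, hGT, by linarith, by linarith⟩

/-- **integrated Hadamard formula.** Let `T > 0`, `ξ : ℝ → ℝ` continuous
on `[0,T]`, and `W, Z : ℝ → ℂ` with, for every `t ∈ [0,T]`: `Im(W t) > 0`,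
`Im(Z t) > 0`, `W t ≠ Z t`, and the Loewner ODEs `W' t = 2/(W t - ξ t)`,
`Z' t = 2/(Z t - ξ t)`. Then `P_W, P_Z > 0` on `[0,T]`, `G(T) ≥ 0`, and
`2π·∫₀^T P_W(t)·P_Z(t) dt = G(0) - G(T) ≤ G(0)`. -/
theorem statement13 (T : ℝ) (hT : 0 < T) (ξ : ℝ → ℝ)
    (hξ : ContinuousOn ξ (Set.Icc 0 T)) (W Z : ℝ → ℂ)
    (hW : ∀ t ∈ Set.Icc 0 T, 0 < (W t).im) (hZ : ∀ t ∈ Set.Icc 0 T, 0 < (Z t).im)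
    (hWZ : ∀ t ∈ Set.Icc 0 T, W t ≠ Z t)
    (hW' : ∀ t ∈ Set.Icc 0 T, HasDerivAt W (2 / (W t - (ξ t : ℂ))) t)
    (hZ' : ∀ t ∈ Set.Icc 0 T, HasDerivAt Z (2 / (Z t - (ξ t : ℂ))) t) :
    (∀ t ∈ Set.Icc 0 T, 0 < PoisT ξ W t ∧ 0 < PoisT ξ Z t) ∧
    0 ≤ GreenT W Z T ∧
    2 * Real.pi * ∫ t in (0 : ℝ)..T, PoisT ξ W t * PoisT ξ Z t
      = GreenT W Z 0 - GreenT W Z T ∧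
    2 * Real.pi * ∫ t in (0 : ℝ)..T, PoisT ξ W t * PoisT ξ Z t
      ≤ GreenT W Z 0 :=
  statement13_general T hT ξ W Z hW hZ hWZ hW' hZ'
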